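/- arXiv:2209.06304 — 6 statements merged into one kernel-verified Lean document; each statement's English description precedes it below -/
import Mathlib

section
/- Let Φ: G → H be a right resolver between finite graphs with G strongly connected. Then all minimal images of Φ have the same cardinality. -/
/-- A finite directed multigraph. -/
structure MGraph where
  V : Type
  E : Type
  [fV : Fintype V]
  [fE : Fintype E]
  src : E → V
  tgt : E → V

attribute [instance] MGraph.fV MGraph.fE

namespace MGraph

/-- `G.IsPathFrom I w` : the list of edges `w` is a path starting at `I`. -/
def IsPathFrom (G : MGraph) : G.V → List G.E → Prop
  | _, [] => True
  | I, e :: es => G.src e = I ∧ G.IsPathFrom (G.tgt e) es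

/-- Terminal vertex of the path `w` starting at `I`. -/
def pathEnd (G : MGraph) : G.V → List G.E → G.V
  | I, [] => I
  | _, e :: es => G.pathEnd (G.tgt e) es

def StronglyConnected (G : MGraph) : Prop :=
  ∀ I J : G.V, ∃ w : List G.E, G.IsPathFrom I w ∧ G.pathEnd I w = J

/-- Graph homomorphism. -/
structure Hom (G H : MGraph) where
  vmap : G.V → H.V
  emap : G.E → H.E
  src_map : ∀ e, H.src (emap e) = vmap (G.src e)
  tgt_map : ∀ e, H.tgt (emap e) = vmap (G.tgt e)

/-- Right resolving: surjective, and a bijection on outgoing edge sets. -/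
def Hom.RightResolving {G H : MGraph} (Φ : Hom G H) : Prop :=
  Function.Surjective Φ.vmap ∧
  ∀ I : G.V, Set.BijOn Φ.emap {e | G.src e = I} {f | H.src f = Φ.vmap I}

/-- Left resolving: surjective, and a bijection on incoming edge sets. -/
def Hom.LeftResolving {G H : MGraph} (Φ : Hom G H) : Prop :=
  Function.Surjective Φ.vmap ∧
  ∀ I : G.V, Set.BijOn Φ.emap {e | G.tgt e = I} {f | H.tgt f = Φ.vmap I}

def Hom.BiResolving {G H : MGraph} (Φ : Hom G H) : Prop :=
  Φ.RightResolving ∧ Φ.LeftResolving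

/-- Forward action: terminal vertices of lifts of `w` starting in `U`. -/
def Hom.fwd {G H : MGraph} (Φ : Hom G H) (U : Set G.V) (w : List H.E) : Set G.V :=
  {J' | ∃ I' ∈ U, ∃ π : List G.E,
    G.IsPathFrom I' π ∧ π.map Φ.emap = w ∧ G.pathEnd I' π = J'}

/-- Backward action: starting vertices whose lift of `w` ends in `S`. -/
def Hom.bwd {G H : MGraph} (Φ : Hom G H) (w : List H.E) (S : Set G.V) : Set G.V :=
  {J' | ∃ π : List G.E,
    G.IsPathFrom J' π ∧ π.map Φ.emap = w ∧ G.pathEnd J' π ∈ S}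

end MGraph

open MGraph


/-- `U` is a minimal image of the right resolver `Φ`: `U = ∂Φ⁻¹(I) ·_Φ u` for some
vertex `I` and path `u` from `I`, and following any further path preserves cardinality. -/
def MGraph.Hom.MinImage {G H : MGraph} (Φ : MGraph.Hom G H) (U : Set G.V) : Prop :=
  ∃ (I : H.V) (u : List H.E), H.IsPathFrom I u ∧
    U = Φ.fwd (Φ.vmap ⁻¹' {I}) u ∧
    ∀ v : List H.E, H.IsPathFrom (H.pathEnd I u) v → (Φ.fwd U v).ncard = U.ncard

namespace MGraph

lemma pathEnd_append (G : MGraph) (a b : List G.E) (I : G.V) :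
    G.pathEnd I (a ++ b) = G.pathEnd (G.pathEnd I a) b := by
  induction a generalizing I with
  | nil => rfl
  | cons e es ih => simp [pathEnd, ih]

lemma isPathFrom_append (G : MGraph) (a b : List G.E) (I : G.V) :
    G.IsPathFrom I (a ++ b) ↔ G.IsPathFrom I a ∧ G.IsPathFrom (G.pathEnd I a) b := by
  induction a generalizing I with
  | nil => simp [IsPathFrom, pathEnd]
  | cons e es ih => simp [IsPathFrom, pathEnd, ih, and_assoc]

lemma Hom.vmap_pathEnd {G H : MGraph} (Φ : Hom G H) (π : List G.E) (I : G.V) :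
    Φ.vmap (G.pathEnd I π) = H.pathEnd (Φ.vmap I) (π.map Φ.emap) := by
  induction π generalizing I with
  | nil => rfl
  | cons e es ih => simp [pathEnd, ih, Φ.tgt_map]

lemma Hom.map_isPathFrom {G H : MGraph} (Φ : Hom G H) (π : List G.E) (I : G.V)
    (h : G.IsPathFrom I π) : H.IsPathFrom (Φ.vmap I) (π.map Φ.emap) := by
  induction π generalizing I with
  | nil => trivial
  | cons e es ih =>
    obtain ⟨h1, h2⟩ := h
    exact ⟨by rw [Φ.src_map, h1], by rw [Φ.tgt_map]; exact ih _ h2⟩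

lemma Hom.fwd_mono {G H : MGraph} (Φ : Hom G H) {U W : Set G.V} (h : U ⊆ W)
    (w : List H.E) : Φ.fwd U w ⊆ Φ.fwd W w := by
  rintro J ⟨I, hI, π, h1, h2, h3⟩; exact ⟨I, h hI, π, h1, h2, h3⟩

lemma Hom.fwd_append {G H : MGraph} (Φ : Hom G H) (U : Set G.V) (w₁ w₂ : List H.E) :
    Φ.fwd U (w₁ ++ w₂) = Φ.fwd (Φ.fwd U w₁) w₂ := by
  ext J
  constructor
  · rintro ⟨I, hI, π, hπ, hmap, rfl⟩
    set n := w₁.length with hn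
    have hm1 : (π.take n).map Φ.emap = w₁ := by
      rw [List.map_take, hmap, hn, List.take_left]
    have hm2 : (π.drop n).map Φ.emap = w₂ := by
      rw [List.map_drop, hmap, hn, List.drop_left]
    have hsplit : π = π.take n ++ π.drop n := (List.take_append_drop n π).symm
    rw [hsplit] at hπ ⊢
    rw [G.isPathFrom_append] at hπ
    refine ⟨G.pathEnd I (π.take n), ⟨I, hI, π.take n, hπ.1, hm1, rfl⟩,
      π.drop n, hπ.2, hm2, ?_⟩
    rw [G.pathEnd_append]
  · rintro ⟨M, ⟨I, hI, π₁, hp1, hm1, rfl⟩, π₂, hp2, hm2, rfl⟩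
    refine ⟨I, hI, π₁ ++ π₂, ?_, ?_, ?_⟩
    · rw [G.isPathFrom_append]; exact ⟨hp1, hp2⟩
    · simp [hm1, hm2]
    · rw [G.pathEnd_append]

end MGraph

lemma minImage_card_le {G H : MGraph} (Φ : MGraph.Hom G H)
    (hH : ∀ I J : H.V, ∃ w, H.IsPathFrom I w ∧ H.pathEnd I w = J)
    (U₁ U₂ : Set G.V) (h₁ : Φ.MinImage U₁) (h₂ : Φ.MinImage U₂) :
    U₁.ncard ≤ U₂.ncard := by
  obtain ⟨I₁, u₁, hu₁, hU₁, hmin₁⟩ := h₁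
  obtain ⟨I₂, u₂, hu₂, hU₂, _⟩ := h₂
  obtain ⟨v, hv, hvend⟩ := hH (H.pathEnd I₁ u₁) I₂
  have hfib : Φ.fwd U₁ v ⊆ Φ.vmap ⁻¹' {I₂} := by
    rintro J ⟨I', hI', π, hπ, hmap, rfl⟩
    have hI'v : Φ.vmap I' = H.pathEnd I₁ u₁ := by
      rw [hU₁] at hI'
      obtain ⟨K, hK, ρ, hρ, hρm, rfl⟩ := hI'
      simp only [Set.mem_preimage, Set.mem_singleton_iff] at hK
      rw [Φ.vmap_pathEnd, hρm, hK]
    simp only [Set.mem_preimage, Set.mem_singleton_iff]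
    rw [Φ.vmap_pathEnd, hmap, hI'v, hvend]
  have hsub : Φ.fwd U₁ (v ++ u₂) ⊆ U₂ := by
    rw [Φ.fwd_append, hU₂]
    exact Φ.fwd_mono hfib u₂
  have hpath : H.IsPathFrom (H.pathEnd I₁ u₁) (v ++ u₂) := by
    rw [H.isPathFrom_append]
    exact ⟨hv, hvend ▸ hu₂⟩
  calc U₁.ncard = (Φ.fwd U₁ (v ++ u₂)).ncard := (hmin₁ (v ++ u₂) hpath).symm
    _ ≤ U₂.ncard := Set.ncard_le_ncard hsub U₂.toFinite

/-- All minimal images of a right resolver (with strongly connected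
domain) have the same cardinality. -/
theorem minImage_card_eq {G H : MGraph} (Φ : MGraph.Hom G H)
    (hΦ : Φ.RightResolving) (hG : G.StronglyConnected)
    (U₁ U₂ : Set G.V) (h₁ : Φ.MinImage U₁) (h₂ : Φ.MinImage U₂) :
    U₁.ncard = U₂.ncard := by
  have hH : ∀ I J : H.V, ∃ w, H.IsPathFrom I w ∧ H.pathEnd I w = J := by
    intro I J
    obtain ⟨I', rfl⟩ := hΦ.1 I
    obtain ⟨J', rfl⟩ := hΦ.1 J
    obtain ⟨w, hw, hwe⟩ := hG I' J'
    exact ⟨w.map Φ.emap, Φ.map_isPathFrom w I' hw, by rw [← Φ.vmap_pathEnd, hwe]⟩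
  exact le_antisymm (minImage_card_le Φ hH U₁ U₂ h₁ h₂)
    (minImage_card_le Φ hH U₂ U₁ h₂ h₁)
end

section
/- Let Φ: G → H be a right resolver between finite graphs with G strongly connected. Then every vertex of G is contained in some minimal image of Φ. -/
open MGraph


section Aux

variable {G H : MGraph} (Φ : MGraph.Hom G H)

lemma aux_isPathFrom_append (I : G.V) (u v : List G.E) :
    G.IsPathFrom I (u ++ v) ↔ G.IsPathFrom I u ∧ G.IsPathFrom (G.pathEnd I u) v := by
  induction u generalizing I with
  | nil => simp [MGraph.IsPathFrom, MGraph.pathEnd]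
  | cons e es ih => simp [MGraph.IsPathFrom, MGraph.pathEnd, ih, and_assoc]

lemma aux_pathEnd_append (I : G.V) (u v : List G.E) :
    G.pathEnd I (u ++ v) = G.pathEnd (G.pathEnd I u) v := by
  induction u generalizing I with
  | nil => rfl
  | cons e es ih => simp [MGraph.pathEnd, ih]

lemma aux_isPathFrom_map (I' : G.V) (π : List G.E) (h : G.IsPathFrom I' π) :
    H.IsPathFrom (Φ.vmap I') (π.map Φ.emap) := by
  induction π generalizing I' with
  | nil => trivial
  | cons e es ih =>
    obtain ⟨h1, h2⟩ := h
    refine ⟨by rw [Φ.src_map, h1], ?_⟩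
    rw [Φ.tgt_map]
    exact ih _ h2

lemma aux_pathEnd_map (I' : G.V) (π : List G.E) :
    H.pathEnd (Φ.vmap I') (π.map Φ.emap) = Φ.vmap (G.pathEnd I' π) := by
  induction π generalizing I' with
  | nil => rfl
  | cons e es ih => simp [MGraph.pathEnd, Φ.tgt_map, ih]

lemma aux_lift_exists (hΦ : Φ.RightResolving) (I' : G.V) (w : List H.E)
    (h : H.IsPathFrom (Φ.vmap I') w) :
    ∃ π : List G.E, G.IsPathFrom I' π ∧ π.map Φ.emap = w := by
  induction w generalizing I' with
  | nil => exact ⟨[], trivial, rfl⟩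
  | cons f fs ih =>
    obtain ⟨h1, h2⟩ := h
    obtain ⟨e, he, hee⟩ := (hΦ.2 I').surjOn h1
    have htgt : Φ.vmap (G.tgt e) = H.tgt f := by rw [← hee, Φ.tgt_map]
    obtain ⟨π, hπ1, hπ2⟩ := ih (G.tgt e) (htgt ▸ h2)
    exact ⟨e :: π, ⟨he, hπ1⟩, by simp [hee, hπ2]⟩

lemma aux_lift_unique (hΦ : Φ.RightResolving) (I' : G.V) (π π' : List G.E)
    (hπ : G.IsPathFrom I' π) (hπ' : G.IsPathFrom I' π')
    (h : π.map Φ.emap = π'.map Φ.emap) : π = π' := by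
  induction π generalizing I' π' with
  | nil => simpa using (List.map_eq_nil_iff.mp h.symm)
  | cons e es ih =>
    cases π' with
    | nil => simp at h
    | cons e' es' =>
      simp only [List.map_cons, List.cons.injEq] at h
      obtain ⟨h1, h2⟩ := hπ
      obtain ⟨h1', h2'⟩ := hπ'
      have : e = e' := (hΦ.2 I').injOn (by simpa [Set.mem_setOf_eq] using h1)
        (by simpa [Set.mem_setOf_eq] using h1') h.1
      subst this
      exact congrArg _ (ih (G.tgt e) es' h2 h2' h.2)

lemma aux_fwd_nil (S : Set G.V) : Φ.fwd S [] = S := by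
  ext J
  constructor
  · rintro ⟨I'', hI, π, hπ, hmap, hend⟩
    rw [List.map_eq_nil_iff] at hmap
    subst hmap; subst hend; exact hI
  · intro hJ; exact ⟨J, hJ, [], trivial, rfl, rfl⟩

lemma aux_fwd_append (S : Set G.V) (u v : List H.E) :
    Φ.fwd S (u ++ v) = Φ.fwd (Φ.fwd S u) v := by
  ext J
  constructor
  · rintro ⟨I'', hI, π, hπ, hmap, hend⟩
    have hlen : u.length ≤ (π.map Φ.emap).length := by rw [hmap]; simp
    rw [List.length_map] at hlen
    have hπsplit : π = π.take u.length ++ π.drop u.length := (List.take_append_drop _ _).symm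
    have hmaptake : (π.take u.length).map Φ.emap = u := by
      rw [List.map_take, hmap, List.take_left]
    have hmapdrop : (π.drop u.length).map Φ.emap = v := by
      rw [List.map_drop, hmap, List.drop_left]
    rw [hπsplit, aux_isPathFrom_append] at hπ
    rw [hπsplit, aux_pathEnd_append] at hend
    exact ⟨G.pathEnd I'' (π.take u.length),
      ⟨I'', hI, π.take u.length, hπ.1, hmaptake, rfl⟩,
      π.drop u.length, hπ.2, hmapdrop, hend⟩
  · rintro ⟨K, ⟨I'', hI, π₁, hπ₁, hmap₁, hend₁⟩, π₂, hπ₂, hmap₂, hend₂⟩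
    refine ⟨I'', hI, π₁ ++ π₂, ?_, by simp [hmap₁, hmap₂], ?_⟩
    · rw [aux_isPathFrom_append]
      exact ⟨hπ₁, hend₁ ▸ hπ₂⟩
    · rw [aux_pathEnd_append, hend₁, hend₂]

lemma aux_fwd_ncard_le (hΦ : Φ.RightResolving) (U : Set G.V) (v : List H.E) :
    (Φ.fwd U v).ncard ≤ U.ncard := by
  classical
  set g : G.V → G.V := fun J =>
    if h : ∃ π : List G.E, G.IsPathFrom J π ∧ π.map Φ.emap = v
    then G.pathEnd J h.choose else J with hg
  have hsub : Φ.fwd U v ⊆ g '' U := by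
    rintro K ⟨I'', hI, π, hπ, hmap, hend⟩
    refine ⟨I'', hI, ?_⟩
    have hex : ∃ π : List G.E, G.IsPathFrom I'' π ∧ π.map Φ.emap = v := ⟨π, hπ, hmap⟩
    have hch := hex.choose_spec
    have : hex.choose = π :=
      aux_lift_unique Φ hΦ I'' _ π hch.1 hπ (by rw [hch.2, hmap])
    simp only [hg, dif_pos hex, this, hend]
  exact le_trans (Set.ncard_le_ncard hsub (Set.toFinite _))
    (Set.ncard_image_le (Set.toFinite _))

lemma aux_vmap_mem_fwd {I : H.V} {u : List H.E} {J : G.V}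
    (hJ : J ∈ Φ.fwd (Φ.vmap ⁻¹' {I}) u) : Φ.vmap J = H.pathEnd I u := by
  obtain ⟨I'', hI, π, hπ, hmap, hend⟩ := hJ
  have : Φ.vmap I'' = I := hI
  rw [← hend, ← aux_pathEnd_map, this, hmap]

end Aux

/-- Every vertex of the domain of a right resolver (with strongly
connected domain) is contained in some minimal image. -/
theorem mem_minImage {G H : MGraph} (Φ : MGraph.Hom G H)
    (hΦ : Φ.RightResolving) (hG : G.StronglyConnected) (I' : G.V) :
    ∃ U : Set G.V, Φ.MinImage U ∧ I' ∈ U := by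
  classical
  set I : H.V := Φ.vmap I' with hI
  set F : Set G.V := Φ.vmap ⁻¹' {I} with hF
  set S : Set ℕ := {n | ∃ u : List H.E, H.IsPathFrom I u ∧ (Φ.fwd F u).ncard = n} with hS
  have hSne : S.Nonempty := ⟨F.ncard, [], trivial, by rw [aux_fwd_nil]⟩
  set n : ℕ := sInf S with hn
  obtain ⟨u, hu, hcard⟩ : n ∈ S := Nat.sInf_mem hSne
  set U₀ : Set G.V := Φ.fwd F u with hU₀
  -- I' lifts u, so U₀ is nonempty
  obtain ⟨π₀, hπ₀, hmap₀⟩ := aux_lift_exists Φ hΦ I' u (hI ▸ hu)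
  have hJ'' : G.pathEnd I' π₀ ∈ U₀ := ⟨I', rfl, π₀, hπ₀, hmap₀, rfl⟩
  set J'' : G.V := G.pathEnd I' π₀
  -- path from J'' back to I'
  obtain ⟨π, hπ, hπend⟩ := hG J'' I'
  set w : List H.E := π.map Φ.emap with hw
  have hvJ : Φ.vmap J'' = H.pathEnd I u := aux_vmap_mem_fwd Φ hJ''
  have hwpath : H.IsPathFrom (H.pathEnd I u) w := hvJ ▸ aux_isPathFrom_map Φ _ _ hπ
  set U : Set G.V := Φ.fwd F (u ++ w) with hU
  have hUeq : U = Φ.fwd U₀ w := aux_fwd_append Φ F u w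
  have hI'U : I' ∈ U := by
    rw [hUeq]
    exact ⟨J'', hJ'', π, hπ, rfl, hπend⟩
  have huw : H.IsPathFrom I (u ++ w) := by
    rw [aux_isPathFrom_append]; exact ⟨hu, hwpath⟩
  -- cardinality facts
  have hUle : U.ncard ≤ n := by
    rw [hUeq, ← hcard]; exact aux_fwd_ncard_le Φ hΦ U₀ w
  have hUge : n ≤ U.ncard := Nat.sInf_le ⟨u ++ w, huw, rfl⟩
  have hUn : U.ncard = n := le_antisymm hUle hUge
  refine ⟨U, ⟨I, u ++ w, huw, rfl, ?_⟩, hI'U⟩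
  intro v hv
  have hvfwd : Φ.fwd U v = Φ.fwd F ((u ++ w) ++ v) := (aux_fwd_append Φ F (u ++ w) v).symm
  have hge : n ≤ (Φ.fwd U v).ncard := by
    refine Nat.sInf_le ⟨(u ++ w) ++ v, ?_, hvfwd ▸ rfl⟩
    rw [aux_isPathFrom_append]
    exact ⟨huw, by rwa [aux_pathEnd_append] at hv ⊢⟩
  have hle : (Φ.fwd U v).ncard ≤ U.ncard := aux_fwd_ncard_le Φ hΦ U v
  omega
end

section
/- Let G be a finite strongly connected directed multigraph and Φ: G → H a right resolving homomorphism. If for every vertex I of G the restriction of the edge map of Φ to the incoming edges E^I(G) is surjective onto E^{∂Φ(I)}(H), then this restriction is injective for every vertex I of G; hence Φ is bi-resolving. -/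
open MGraph

/-- If a right resolver on a strongly connected graph is surjective on
each incoming edge set, then it is injective on each incoming edge set; hence
bi-resolving. -/
theorem surjOn_incoming_injOn {G H : MGraph} (Φ : MGraph.Hom G H)
    (hG : G.StronglyConnected) (hΦ : Φ.RightResolving)
    (hsurj : ∀ I : G.V,
      Set.SurjOn Φ.emap {e | G.tgt e = I} {f | H.tgt f = Φ.vmap I}) :
    (∀ I : G.V, Set.InjOn Φ.emap {e | G.tgt e = I}) ∧ Φ.BiResolving := by
  classical
  set c : H.V → ℕ := fun J => (Finset.univ.filter (fun I => Φ.vmap I = J)).card with hc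
  -- fiber of an edge f under emap has cardinality c (src f)
  have hfib : ∀ f : H.E,
      (Finset.univ.filter (fun e => Φ.emap e = f)).card = c (H.src f) := by
    intro f
    apply Finset.card_bij (fun e _ => G.src e)
    · intro e he
      simp only [Finset.mem_filter, Finset.mem_univ, true_and] at he ⊢
      rw [← he, Φ.src_map]
    · intro e1 h1 e2 h2 hsrc
      simp only [Finset.mem_filter, Finset.mem_univ, true_and] at h1 h2
      exact (hΦ.2 (G.src e1)).2.1 (by simp [Set.mem_setOf_eq])
        (by simpa [Set.mem_setOf_eq] using hsrc.symm) (h1.trans h2.symm)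
    · intro I hI
      simp only [Finset.mem_filter, Finset.mem_univ, true_and] at hI
      obtain ⟨e, he, hef⟩ := (hΦ.2 I).2.2 (show f ∈ {f' | H.src f' = Φ.vmap I} from hI.symm)
      exact ⟨e, by simp [hef], he⟩
  -- c nonincreasing along edges of H
  have hle : ∀ f : H.E, c (H.tgt f) ≤ c (H.src f) := by
    intro f
    rw [← hfib]
    apply Finset.card_le_card_of_surjOn G.tgt
    intro I hI
    simp only [Finset.coe_filter, Finset.mem_univ, true_and, Set.mem_setOf_eq] at hI
    obtain ⟨e, he, hef⟩ := hsurj I (show f ∈ {f' | H.tgt f' = Φ.vmap I} from hI.symm)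
    exact ⟨e, by simp [Set.mem_setOf_eq, hef], he⟩
  -- c nonincreasing along paths of G (projected)
  have hmono : ∀ (w : List G.E) (I : G.V), G.IsPathFrom I w →
      c (Φ.vmap (G.pathEnd I w)) ≤ c (Φ.vmap I) := by
    intro w
    induction w with
    | nil => intro I _; simp [MGraph.pathEnd]
    | cons e es ih =>
      rintro I ⟨hsrc, hrest⟩
      calc c (Φ.vmap (G.pathEnd (G.tgt e) es)) ≤ c (Φ.vmap (G.tgt e)) := ih _ hrest
        _ = c (H.tgt (Φ.emap e)) := by rw [Φ.tgt_map]
        _ ≤ c (H.src (Φ.emap e)) := hle _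
        _ = c (Φ.vmap (G.src e)) := by rw [Φ.src_map]
        _ = c (Φ.vmap I) := by rw [hsrc]
  -- equality
  have heq : ∀ f : H.E, c (H.tgt f) = c (H.src f) := by
    intro f
    refine le_antisymm (hle f) ?_
    obtain ⟨I', hI'⟩ := hΦ.1 (H.src f)
    obtain ⟨e, he, hef⟩ := (hΦ.2 I').2.2 (show f ∈ {f' | H.src f' = Φ.vmap I'} from hI'.symm)
    obtain ⟨w, hw, hend⟩ := hG (G.tgt e) (G.src e)
    have h1 := hmono w (G.tgt e) hw
    rw [hend] at h1
    calc c (H.src f) = c (Φ.vmap (G.src e)) := by rw [← hef, Φ.src_map]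
      _ ≤ c (Φ.vmap (G.tgt e)) := h1
      _ = c (H.tgt f) := by rw [← Φ.tgt_map, hef]
  -- injectivity on incoming edges
  have hinj : ∀ I : G.V, Set.InjOn Φ.emap {e | G.tgt e = I} := by
    intro I e1 he1 e2 he2 hmap
    simp only [Set.mem_setOf_eq] at he1 he2
    set f := Φ.emap e1 with hf
    have he1f : Φ.emap e1 = f := rfl
    have he2f : Φ.emap e2 = f := hmap.symm
    have hIf : Φ.vmap I = H.tgt f := by rw [hf, Φ.tgt_map, he1]
    have key : ∀ ⦃a₁⦄, a₁ ∈ Finset.univ.filter (fun e => Φ.emap e = f) →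
        ∀ ⦃a₂⦄, a₂ ∈ Finset.univ.filter (fun e => Φ.emap e = f) →
        G.tgt a₁ = G.tgt a₂ → a₁ = a₂ := by
      have := Finset.inj_on_of_surj_on_of_card_le
        (s := Finset.univ.filter (fun e => Φ.emap e = f))
        (t := Finset.univ.filter (fun J => Φ.vmap J = H.tgt f))
        (fun e _ => G.tgt e)
        (by
          intro e he
          simp only [Finset.mem_filter, Finset.mem_univ, true_and] at he ⊢
          rw [← he, Φ.tgt_map])
        (by
          intro J hJ
          simp only [Finset.mem_filter, Finset.mem_univ, true_and] at hJ
          obtain ⟨e, he, hef⟩ := hsurj J (show f ∈ {f' | H.tgt f' = Φ.vmap J} from hJ.symm)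
          exact ⟨e, by simp [hef], he⟩)
        (by rw [hfib f, ← heq f])
      exact this
    exact key (by simp [he1f]) (by simp [he2f]) (by rw [he1, he2])
  refine ⟨hinj, hΦ, hΦ.1, fun I => ⟨?_, hinj I, hsurj I⟩⟩
  intro e he
  simp only [Set.mem_setOf_eq] at he ⊢
  rw [Φ.tgt_map, he]
end

section
/- Let Φ: G → H be a right resolver between finite strongly connected graphs. The stability relation ∼_Φ is an equivalence relation on each fiber of ∂Φ. -/
open MGraph


/-- The stability relation of a right resolver: `I₁' ∼_Φ I₂'` iff they are in the same
fiber and for every path `u` from the common image there is a continuation `v` such that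
`I₁' ·_Φ uv = I₂' ·_Φ uv` (as sets of endpoints of lifts). -/
def MGraph.Hom.Stable {G H : MGraph} (Φ : MGraph.Hom G H) (I₁ I₂ : G.V) : Prop :=
  Φ.vmap I₁ = Φ.vmap I₂ ∧
  ∀ u : List H.E, H.IsPathFrom (Φ.vmap I₁) u →
    ∃ v : List H.E, H.IsPathFrom (H.pathEnd (Φ.vmap I₁) u) v ∧
      Φ.fwd {I₁} (u ++ v) = Φ.fwd {I₂} (u ++ v)


lemma MGraph.isPathFrom_append_s6 {G : MGraph} (I : G.V) (w₁ w₂ : List G.E) :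
    G.IsPathFrom I (w₁ ++ w₂) ↔
      G.IsPathFrom I w₁ ∧ G.IsPathFrom (G.pathEnd I w₁) w₂ := by
  induction w₁ generalizing I with
  | nil => simp [MGraph.IsPathFrom, MGraph.pathEnd]
  | cons e es ih =>
    simp [MGraph.IsPathFrom, MGraph.pathEnd, ih, and_assoc]

lemma MGraph.pathEnd_append_s6 {G : MGraph} (I : G.V) (w₁ w₂ : List G.E) :
    G.pathEnd I (w₁ ++ w₂) = G.pathEnd (G.pathEnd I w₁) w₂ := by
  induction w₁ generalizing I with
  | nil => rfl
  | cons e es ih => simp [MGraph.pathEnd, ih]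

lemma MGraph.Hom.fwd_append_s6 {G H : MGraph} (Φ : MGraph.Hom G H) (U : Set G.V)
    (w₁ w₂ : List H.E) : Φ.fwd U (w₁ ++ w₂) = Φ.fwd (Φ.fwd U w₁) w₂ := by
  ext J'
  constructor
  · rintro ⟨I', hI', π, hπ, hmap, hend⟩
    rcases List.map_eq_append_iff.mp hmap with ⟨π₁, π₂, rfl, h1, h2⟩
    rw [MGraph.isPathFrom_append_s6] at hπ
    exact ⟨G.pathEnd I' π₁, ⟨I', hI', π₁, hπ.1, h1, rfl⟩, π₂, hπ.2, h2,
      by rw [← MGraph.pathEnd_append_s6]; exact hend⟩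
  · rintro ⟨K', ⟨I', hI', π₁, hπ₁, h1, rfl⟩, π₂, hπ₂, h2, hend⟩
    refine ⟨I', hI', π₁ ++ π₂, ?_, by simp [h1, h2], ?_⟩
    · rw [MGraph.isPathFrom_append_s6]; exact ⟨hπ₁, hπ₂⟩
    · rw [MGraph.pathEnd_append_s6]; exact hend

/-- The stability relation of a right resolver between finite strongly
connected graphs is an equivalence relation on each fiber of the vertex map. -/
theorem stable_equivalence {G H : MGraph} (Φ : MGraph.Hom G H)
    (hΦ : Φ.RightResolving) (hG : G.StronglyConnected) (hH : H.StronglyConnected)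
    (I : H.V) :
    (∀ I' ∈ Φ.vmap ⁻¹' {I}, Φ.Stable I' I') ∧
    (∀ I₁ ∈ Φ.vmap ⁻¹' {I}, ∀ I₂ ∈ Φ.vmap ⁻¹' {I},
      Φ.Stable I₁ I₂ → Φ.Stable I₂ I₁) ∧
    (∀ I₁ ∈ Φ.vmap ⁻¹' {I}, ∀ I₂ ∈ Φ.vmap ⁻¹' {I}, ∀ I₃ ∈ Φ.vmap ⁻¹' {I},
      Φ.Stable I₁ I₂ → Φ.Stable I₂ I₃ → Φ.Stable I₁ I₃) := by
  refine ⟨fun I' _ => ⟨rfl, fun u hu => ⟨[], by simp [MGraph.IsPathFrom], rfl⟩⟩,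
    fun I₁ _ I₂ _ h => ⟨h.1.symm, fun u hu => ?_⟩,
    fun I₁ _ I₂ _ I₃ _ h12 h23 => ⟨h12.1.trans h23.1, fun u hu => ?_⟩⟩
  · rw [← h.1] at hu ⊢
    obtain ⟨v, hv, heq⟩ := h.2 u hu
    exact ⟨v, hv, heq.symm⟩
  · obtain ⟨v₁, hv₁, heq₁⟩ := h12.2 u hu
    have hu' : H.IsPathFrom (Φ.vmap I₂) (u ++ v₁) := by
      rw [← h12.1, MGraph.isPathFrom_append_s6]; exact ⟨hu, hv₁⟩
    obtain ⟨v₂, hv₂, heq₂⟩ := h23.2 (u ++ v₁) hu'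
    rw [← h12.1] at hv₂
    refine ⟨v₁ ++ v₂, ?_, ?_⟩
    · rw [MGraph.isPathFrom_append_s6]
      exact ⟨hv₁, by rw [← MGraph.pathEnd_append_s6]; exact hv₂⟩
    · have assoc : u ++ (v₁ ++ v₂) = (u ++ v₁) ++ v₂ := by simp
      rw [assoc, Φ.fwd_append_s6, heq₁, ← Φ.fwd_append_s6, heq₂, Φ.fwd_append_s6]
end

section
/- The class of weakly almost bunchy graphs is closed under right resolving homomorphisms: if G is weakly almost bunchy and Φ: G → H is a right resolver, then H is weakly almost bunchy. -/
open MGraph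


/-- The follower states of a vertex: terminal vertices of its outgoing edges. -/
def MGraph.followers (G : MGraph) (I : G.V) : Set G.V :=
  {J | ∃ e : G.E, G.src e = I ∧ G.tgt e = J}

/-- The set of edges from `I` to `J`. -/
def MGraph.edgesBetween (M : MGraph) (I J : M.V) : Set M.E :=
  {e | M.src e = I ∧ M.tgt e = J}

/-- `G` is weakly almost bunchy, relative to its minimal right resolving factor `M`
with canonical vertex map `σ`: for every pair `(I, J)` of vertices of `M` with at
least two parallel edges from `I` to `J`, at most one vertex in `σ⁻¹(I)` has exactly
`|E_I^J(M)|` followers in `σ⁻¹(J)`. -/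
def WeaklyAlmostBunchy (G M : MGraph) (σ : G.V → M.V) : Prop :=
  ∀ I J : M.V, 2 ≤ (M.edgesBetween I J).ncard →
    ∀ I₁ I₂ : G.V, σ I₁ = I → σ I₂ = I →
      (σ ⁻¹' {J} ∩ G.followers I₁).ncard = (M.edgesBetween I J).ncard →
      (σ ⁻¹' {J} ∩ G.followers I₂).ncard = (M.edgesBetween I J).ncard →
      I₁ = I₂

/-- Upper bound: the fiber-followers of a vertex are at most the parallel edges in `M`. -/
lemma followers_ncard_le {G M : MGraph} (S : MGraph.Hom G M) (hS : S.RightResolving)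
    (I' : G.V) (J : M.V) :
    (S.vmap ⁻¹' {J} ∩ G.followers I').ncard ≤ (M.edgesBetween (S.vmap I') J).ncard := by
  set A : Set G.E := {e | G.src e = I' ∧ S.vmap (G.tgt e) = J} with hA
  have h1 : S.vmap ⁻¹' {J} ∩ G.followers I' ⊆ G.tgt '' A := by
    rintro K ⟨hK, e, hsrc, htgt⟩
    exact ⟨e, ⟨hsrc, by rw [htgt]; exact hK⟩, htgt⟩
  have h2 : (S.vmap ⁻¹' {J} ∩ G.followers I').ncard ≤ (G.tgt '' A).ncard :=
    Set.ncard_le_ncard h1 (Set.toFinite _)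
  have h3 : (G.tgt '' A).ncard ≤ A.ncard := Set.ncard_image_le (Set.toFinite _)
  have hinj : Set.InjOn S.emap A := (hS.2 I').injOn.mono (fun e he => he.1)
  have h4 : A.ncard = (S.emap '' A).ncard := (Set.ncard_image_of_injOn hinj).symm
  have h5 : S.emap '' A ⊆ M.edgesBetween (S.vmap I') J := by
    rintro f ⟨e, ⟨hs, ht⟩, rfl⟩
    exact ⟨by rw [S.src_map, hs], by rw [S.tgt_map, ht]⟩
  have h6 : (S.emap '' A).ncard ≤ (M.edgesBetween (S.vmap I') J).ncard :=
    Set.ncard_le_ncard h5 (Set.toFinite _)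
  omega

/-- The fiber-followers count does not increase when pushing forward along a right resolver. -/
lemma followers_ncard_push {G H M : MGraph} (Φ : MGraph.Hom G H) (hΦ : Φ.RightResolving)
    (SH : MGraph.Hom H M) (I' : G.V) (J : M.V) :
    (SH.vmap ⁻¹' {J} ∩ H.followers (Φ.vmap I')).ncard ≤
      ((SH.vmap ∘ Φ.vmap) ⁻¹' {J} ∩ G.followers I').ncard := by
  have hsub : SH.vmap ⁻¹' {J} ∩ H.followers (Φ.vmap I') ⊆
      Φ.vmap '' ((SH.vmap ∘ Φ.vmap) ⁻¹' {J} ∩ G.followers I') := by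
    rintro K ⟨hK, f, hsrc, htgt⟩
    obtain ⟨e, he, hef⟩ := (hΦ.2 I').surjOn (by exact hsrc : f ∈ {f | H.src f = Φ.vmap I'})
    refine ⟨G.tgt e, ⟨?_, e, he, rfl⟩, ?_⟩
    · show SH.vmap (Φ.vmap (G.tgt e)) ∈ ({J} : Set M.V)
      rw [← Φ.tgt_map, hef, htgt]; exact hK
    · rw [← Φ.tgt_map, hef, htgt]
  calc (SH.vmap ⁻¹' {J} ∩ H.followers (Φ.vmap I')).ncard
      ≤ (Φ.vmap '' ((SH.vmap ∘ Φ.vmap) ⁻¹' {J} ∩ G.followers I')).ncard :=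
        Set.ncard_le_ncard hsub (Set.toFinite _)
    _ ≤ _ := Set.ncard_image_le (Set.toFinite _)

/-- The class of weakly almost bunchy graphs is closed under right
resolvers.  Here `M` plays the role of the common minimal right resolving factor
`M(G) = M(H)`, with canonical right resolvers `SG : G → M`, `SH : H → M` whose
vertex maps satisfy `SG = SH ∘ ∂Φ`. -/
theorem weaklyAlmostBunchy_closed_rightResolving {G H M : MGraph}
    (Φ : MGraph.Hom G H) (hΦ : Φ.RightResolving)
    (SG : MGraph.Hom G M) (hSG : SG.RightResolving)
    (SH : MGraph.Hom H M) (hSH : SH.RightResolving)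
    (hcomp : SG.vmap = SH.vmap ∘ Φ.vmap)
    (hwab : WeaklyAlmostBunchy G M SG.vmap) :
    WeaklyAlmostBunchy H M SH.vmap := by
  intro I J hIJ I₁ I₂ hI₁ hI₂ h1 h2
  obtain ⟨I₁', rfl⟩ := hΦ.1 I₁
  obtain ⟨I₂', rfl⟩ := hΦ.1 I₂
  have hSG₁ : SG.vmap I₁' = I := by rw [hcomp]; exact hI₁
  have hSG₂ : SG.vmap I₂' = I := by rw [hcomp]; exact hI₂
  have key : ∀ I' : G.V, SG.vmap I' = I →
      (SH.vmap ⁻¹' {J} ∩ H.followers (Φ.vmap I')).ncard = (M.edgesBetween I J).ncard →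
      (SG.vmap ⁻¹' {J} ∩ G.followers I').ncard = (M.edgesBetween I J).ncard := by
    intro I' hI' hcnt
    have hle := followers_ncard_le SG hSG I' J
    rw [hI'] at hle
    have hge := followers_ncard_push Φ hΦ SH I' J
    rw [← hcomp, hcnt] at hge
    omega
  have := hwab I J hIJ I₁' I₂' hSG₁ hSG₂ (key I₁' hSG₁ h1) (key I₂' hSG₂ h2)
  rw [this]
end

section
/- Let Φ: G → H be a bi-resolver between finite strongly connected graphs, let Φ': G → H be a right resolver agreeing with Φ on vertex map and on all edges except that Φ' swaps the Φ-images of two edges e_1, e_2 with common initial vertex and with Φ(e_1) ≠ Φ(e_2). Suppose t(e_1) ≠ t(e_2) lie in a common fiber ∂Φ^{-1}(I). Then no maximal synchronized set of Φ' contained in ∂Φ^{-1}(I) contains exactly one of t(e_1), t(e_2). -/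
open MGraph

/-- Synchronized sets and maximal synchronized sets. -/
def MGraph.Hom.Synced {G H : MGraph} (Φ : MGraph.Hom G H) (J : H.V) (S : Set G.V) : Prop :=
  ∃ (u : List H.E) (I₀ : G.V),
    H.IsPathFrom J u ∧ H.pathEnd J u = Φ.vmap I₀ ∧ S = Φ.bwd u {I₀}

def MGraph.Hom.IsMSS {G H : MGraph} (Φ : MGraph.Hom G H) (J : H.V) (S : Set G.V) : Prop :=
  Φ.Synced J S ∧
  ∀ (K : H.V) (v : List H.E), H.IsPathFrom K v → H.pathEnd K v = J →
    (Φ.bwd v S).ncard ≤ S.ncard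

lemma MGraph.Hom.bwd_single {G H : MGraph} (Φ : Hom G H) (f : H.E) (S : Set G.V) :
    Φ.bwd [f] S = {J' | ∃ e, G.src e = J' ∧ Φ.emap e = f ∧ G.tgt e ∈ S} := by
  ext J'
  constructor
  · rintro ⟨π, hp, hmap, hend⟩
    cases π with
    | nil => simp at hmap
    | cons e es =>
      cases es with
      | nil =>
        simp only [List.map_cons, List.map_nil, List.cons.injEq, and_true] at hmap
        exact ⟨e, hp.1, hmap, hend⟩
      | cons e' es' => simp at hmap
  · rintro ⟨e, h1, h2, h3⟩
    exact ⟨[e], ⟨h1, trivial⟩, by simp [h2], h3⟩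

lemma MGraph.Hom.synced_fiber {G H : MGraph} (Φ : Hom G H) (J : H.V) (S : Set G.V)
    (h : Φ.Synced J S) : ∀ s ∈ S, Φ.vmap s = J := by
  obtain ⟨u, I₀, hu, hend, rfl⟩ := h
  intro s hs
  obtain ⟨π, hp, hmap, hpe⟩ := hs
  cases u with
  | nil =>
    cases π with
    | nil =>
      simp only [MGraph.pathEnd] at hpe hend
      rw [hpe, ← hend]
    | cons e es => simp at hmap
  | cons f u' =>
    cases π with
    | nil => simp at hmap
    | cons e es =>
      simp only [List.map_cons, List.cons.injEq] at hmap
      have h1 : H.src f = J := hu.1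
      have h2 : H.src (Φ.emap e) = Φ.vmap (G.src e) := Φ.src_map e
      rw [hmap.1, hp.1] at h2
      rw [← h2, h1]

lemma MGraph.Hom.count_lemma {G H : MGraph} (Φ : Hom G H) (hΦ : Φ.BiResolving)
    (b : H.E) (S : Set G.V) (hS : ∀ s ∈ S, Φ.vmap s = H.tgt b) :
    {J' | ∃ e, G.src e = J' ∧ Φ.emap e = b ∧ G.tgt e ∈ S}.ncard = S.ncard := by
  set A : Set G.E := {e | Φ.emap e = b ∧ G.tgt e ∈ S} with hA
  have hsrcinj : Set.InjOn G.src A := by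
    intro x hx y hy hxy
    exact (hΦ.1.2 (G.src x)).2.1 (show x ∈ {e | G.src e = G.src x} from rfl)
      (show y ∈ {e | G.src e = G.src x} from hxy.symm) (hx.1.trans hy.1.symm)
  have htgtinj : Set.InjOn G.tgt A := by
    intro x hx y hy hxy
    exact (hΦ.2.2 (G.tgt x)).2.1 (show x ∈ {e | G.tgt e = G.tgt x} from rfl)
      (show y ∈ {e | G.tgt e = G.tgt x} from hxy.symm) (hx.1.trans hy.1.symm)
  have hsrcimg : {J' | ∃ e, G.src e = J' ∧ Φ.emap e = b ∧ G.tgt e ∈ S} = G.src '' A := by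
    ext J'; constructor
    · rintro ⟨e, h1, h2, h3⟩; exact ⟨e, ⟨h2, h3⟩, h1⟩
    · rintro ⟨e, ⟨h2, h3⟩, rfl⟩; exact ⟨e, rfl, h2, h3⟩
  have htgtimg : G.tgt '' A = S := by
    ext s; constructor
    · rintro ⟨e, ⟨_, h3⟩, rfl⟩; exact h3
    · intro hs
      have : b ∈ {f | H.tgt f = Φ.vmap s} := (hS s hs).symm
      obtain ⟨e, he, hbe⟩ := (hΦ.2.2 s).2.2 this
      exact ⟨e, ⟨hbe, he ▸ hs⟩, he⟩
  rw [hsrcimg, Set.ncard_image_of_injOn hsrcinj, ← htgtimg,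
    Set.ncard_image_of_injOn htgtinj]

lemma MGraph.swap_aux {G H : MGraph} (Φ Φ' : MGraph.Hom G H) (hΦ : Φ.BiResolving)
    (e₁ e₂ : G.E) (hsrc : G.src e₁ = G.src e₂) (hem : Φ.emap e₁ ≠ Φ.emap e₂)
    (I : H.V) (hI₂ : Φ.vmap (G.tgt e₂) = I)
    (hvmap : Φ'.vmap = Φ.vmap)
    (hswap₁ : Φ'.emap e₁ = Φ.emap e₂)
    (hrest : ∀ e : G.E, e ≠ e₁ → e ≠ e₂ → Φ'.emap e = Φ.emap e)
    (S : Set G.V) (hmss : Φ'.IsMSS I S)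
    (h₁ : G.tgt e₁ ∈ S) (h₂ : G.tgt e₂ ∉ S) : False := by
  set b := Φ.emap e₂ with hb
  have hS : ∀ s ∈ S, Φ.vmap s = I := by
    intro s hs
    rw [← hvmap]
    exact Φ'.synced_fiber I S hmss.1 s hs
  have hfib : ∀ s ∈ S, Φ.vmap s = H.tgt b := by
    intro s hs
    rw [hb, Φ.tgt_map, hI₂]
    exact hS s hs
  have hkey : Φ'.bwd [b] S = insert (G.src e₁) (Φ.bwd [b] S) := by
    rw [Φ'.bwd_single, Φ.bwd_single]
    ext J'
    simp only [Set.mem_setOf_eq, Set.mem_insert_iff]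
    constructor
    · rintro ⟨e, rfl, hbe, hts⟩
      by_cases he1 : e = e₁
      · left; rw [he1]
      by_cases he2 : e = e₂
      · exact absurd (he2 ▸ hts) h₂
      · exact Or.inr ⟨e, rfl, (hrest e he1 he2) ▸ hbe, hts⟩
    · rintro (rfl | ⟨e, rfl, hbe, hts⟩)
      · exact ⟨e₁, rfl, hswap₁, h₁⟩
      · refine ⟨e, rfl, ?_, hts⟩
        have he1 : e ≠ e₁ := fun h => hem (h ▸ hbe)
        have he2 : e ≠ e₂ := fun h => h₂ (h ▸ hts)
        rw [hrest e he1 he2]; exact hbe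
  have hnot : G.src e₁ ∉ Φ.bwd [b] S := by
    rw [Φ.bwd_single]
    rintro ⟨e, hse, hbe, hts⟩
    have he2 : e = e₂ := (hΦ.1.2 (G.src e₂)).2.1
      (show e ∈ {x | G.src x = G.src e₂} from by rw [Set.mem_setOf_eq, hse, hsrc])
      (show e₂ ∈ {x | G.src x = G.src e₂} from rfl) hbe
    exact h₂ (he2 ▸ hts)
  have hcard : (Φ.bwd [b] S).ncard = S.ncard := by
    rw [Φ.bwd_single]
    exact Φ.count_lemma hΦ b S hfib
  have hpath : H.IsPathFrom (H.src b) [b] := ⟨rfl, trivial⟩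
  have hend : H.pathEnd (H.src b) [b] = I := by
    show H.tgt b = I
    rw [hb, Φ.tgt_map]
    exact hI₂
  have hle := hmss.2 (H.src b) [b] hpath hend
  rw [hkey, Set.ncard_insert_of_notMem hnot (Set.toFinite _), hcard] at hle
  omega

/-- Let Φ be a bi-resolver and Φ' the right resolver obtained from Φ by
swapping the images of two edges e₁, e₂ with common initial vertex, distinct images,
and distinct terminal vertices in a common fiber over I.  Then no maximal
synchronized set of Φ' over I contains exactly one of t(e₁), t(e₂). -/
theorem swap_mss_together {G H : MGraph}
    (hG : G.StronglyConnected) (hH : H.StronglyConnected)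
    (Φ Φ' : MGraph.Hom G H) (hΦ : Φ.BiResolving) (hΦ' : Φ'.RightResolving)
    (e₁ e₂ : G.E) (hsrc : G.src e₁ = G.src e₂) (hem : Φ.emap e₁ ≠ Φ.emap e₂)
    (htgt : G.tgt e₁ ≠ G.tgt e₂)
    (I : H.V) (hI₁ : Φ.vmap (G.tgt e₁) = I) (hI₂ : Φ.vmap (G.tgt e₂) = I)
    (hvmap : Φ'.vmap = Φ.vmap)
    (hswap₁ : Φ'.emap e₁ = Φ.emap e₂) (hswap₂ : Φ'.emap e₂ = Φ.emap e₁)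
    (hrest : ∀ e : G.E, e ≠ e₁ → e ≠ e₂ → Φ'.emap e = Φ.emap e)
    (S : Set G.V) (hmss : Φ'.IsMSS I S) :
    (G.tgt e₁ ∈ S ↔ G.tgt e₂ ∈ S) := by
  constructor
  · intro h1
    by_contra h2
    exact swap_aux Φ Φ' hΦ e₁ e₂ hsrc hem I hI₂ hvmap hswap₁ hrest S hmss h1 h2
  · intro h2
    by_contra h1
    exact swap_aux Φ Φ' hΦ e₂ e₁ hsrc.symm (Ne.symm hem) I hI₁ hvmap hswap₂
      (fun e a b => hrest e b a) S hmss h2 h1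
end
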